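/- arXiv:math/0112217 — 4 statements merged into one kernel-verified Lean document; each statement's English description precedes it below -/
import Mathlib

section
/- The monomial ideal I_{n,t} generated by the monomials x^{e_i} = x_1^t⋯x_{i-1}^t x_{i+1}^t⋯x_n^t for i = 1,…,n equals the intersection ⋂_{1 ≤ i < j ≤ n} ⟨x_i^t, x_j^t⟩. -/
/-!
Both sides are monomial ideals, so membership is decided monomial by monomial. A monomial
`x^d` is divisible by some `∏_{j ≠ i} x_j^t` iff `t ≤ d j` for all but at most one `j`, and lies in
every `⟨x_i^t, x_j^t⟩` iff `t ≤ d i` or `t ≤ d j` for any two coordinates `i < j`; these two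
conditions coincide as soon as there is at least one variable.
-/

open MvPolynomial Finset

theorem Finsupp.sum_single_le_iff {σ : Type*} [DecidableEq σ] (s : Finset σ) (t : ℕ) (d : σ →₀ ℕ) :
    ∑ j ∈ s, Finsupp.single j t ≤ d ↔ ∀ j ∈ s, t ≤ d j := by
  simp only [Finsupp.le_def, Finsupp.finsetSum_apply, Finsupp.single_apply, Finset.sum_ite_eq']
  refine ⟨fun h j hj => by simpa [hj] using h j, fun h j => ?_⟩
  split_ifs with hj
  · exact h j hj
  · exact Nat.zero_le _

namespace MvPolynomial

variable {σ R : Type*} [CommSemiring R]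

theorem prod_X_pow_eq_monomial_sum_single (s : Finset σ) (t : ℕ) :
    ∏ j ∈ s, (X j : MvPolynomial σ R) ^ t = monomial (∑ j ∈ s, Finsupp.single j t) 1 := by
  simp only [monomial_sum_one, X_pow_eq_monomial]

theorem mem_ideal_span_prod_X_pow_iff {ι : Type*} [DecidableEq σ] (s : ι → Finset σ) (t : ℕ)
    (p : MvPolynomial σ R) :
    p ∈ Ideal.span (Set.range fun i => ∏ j ∈ s i, (X j : MvPolynomial σ R) ^ t) ↔
      ∀ d ∈ p.support, ∃ i, ∀ j ∈ s i, t ≤ d j := by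
  have h := mem_ideal_span_monomial_image (R := R) (x := p)
    (s := Set.range fun i => ∑ j ∈ s i, Finsupp.single j t)
  rw [← Set.range_comp] at h
  simp_rw [prod_X_pow_eq_monomial_sum_single]
  simpa only [Function.comp_def, Set.exists_range_iff, Finsupp.sum_single_le_iff] using h

theorem mem_ideal_span_X_pow_pair_iff (i j : σ) (t : ℕ) (p : MvPolynomial σ R) :
    p ∈ Ideal.span {(X i : MvPolynomial σ R) ^ t, X j ^ t} ↔
      ∀ d ∈ p.support, t ≤ d i ∨ t ≤ d j := by
  have h := mem_ideal_span_monomial_image (R := R) (x := p)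
    (s := {Finsupp.single i t, Finsupp.single j t})
  rw [Set.image_pair] at h
  rw [X_pow_eq_monomial, X_pow_eq_monomial, h]
  simp only [Set.mem_insert_iff, Set.mem_singleton_iff, exists_eq_or_imp, exists_eq_left,
    Finsupp.single_le_iff]

end MvPolynomial

theorem exists_forall_ne_iff_forall_lt_imp_or {σ : Type*} [LinearOrder σ] [Nonempty σ]
    (P : σ → Prop) : (∃ i, ∀ j ≠ i, P j) ↔ ∀ i j, i < j → P i ∨ P j := by
  constructor
  · rintro ⟨a, ha⟩ i j hij
    by_cases hia : i = a
    · exact Or.inr (ha j (hia ▸ hij.ne'))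
    · exact Or.inl (ha i hia)
  · intro h
    by_cases hall : ∀ j, P j
    · exact ⟨Classical.arbitrary σ, fun j _ => hall j⟩
    · obtain ⟨a, ha⟩ := not_forall.mp hall
      refine ⟨a, fun j hja => ?_⟩
      rcases hja.lt_or_gt with hlt | hlt
      · exact (h j a hlt).resolve_right ha
      · exact (h a j hlt).resolve_left ha

theorem stmt_0_general (k : Type*) [Field k] (n t : ℕ) (hn : 3 ≤ n) :
    Ideal.span (Set.range fun i : Fin n =>
        ∏ j ∈ Finset.univ.erase i, (X j : MvPolynomial (Fin n) k) ^ t)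
      = ⨅ (i : Fin n) (j : Fin n) (_ : i < j),
          Ideal.span {(X i : MvPolynomial (Fin n) k) ^ t, (X j) ^ t} := by
  have : Nonempty (Fin n) := ⟨⟨0, by omega⟩⟩
  ext p
  simp only [mem_ideal_span_prod_X_pow_iff, Ideal.mem_iInf, mem_ideal_span_X_pow_pair_iff,
    Finset.mem_erase, Finset.mem_univ, and_true, exists_forall_ne_iff_forall_lt_imp_or]
  exact ⟨fun h i j hij d hd => h d hd i j hij, fun h d hd i j hij => h i j hij d hd⟩

/-- The monomial ideal `I_{n,t}` generated by the monomials
`x^{e_i} = ∏_{j ≠ i} x_j^t` equals `⋂_{i < j} ⟨x_i^t, x_j^t⟩`. -/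
theorem stmt_0 (k : Type*) [Field k] (n t : ℕ) (hn : 3 ≤ n) (ht : 1 ≤ t) :
    Ideal.span (Set.range fun i : Fin n =>
        ∏ j ∈ Finset.univ.erase i, (X j : MvPolynomial (Fin n) k) ^ t)
      = ⨅ (i : Fin n) (j : Fin n) (_ : i < j),
          Ideal.span {(X i : MvPolynomial (Fin n) k) ^ t, (X j) ^ t} :=
  stmt_0_general k n t hn
end

section
/- For every nonnegative integer vector (b_1,…,b_n) in Ω, there exists (a_1,…,a_n) ∈ Δ_{n,t} with a_i ≤ b_i for all i; consequently the integral closure of I_{n,t} equals the monomial ideal generated by {x^a : a ∈ Δ_{n,t}}. -/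
open MvPolynomial Finset

/-- Membership in `Ω`, the convex hull of the exponent vectors
`e_i = (t,…,t,0,t,…,t)` plus the nonnegative orthant. -/
def inOmega (n t : ℕ) (b : Fin n → ℝ) : Prop :=
  ∃ c d : Fin n → ℝ, (∀ i, 0 ≤ c i) ∧ (∑ i, c i = 1) ∧ (∀ i, 0 ≤ d i) ∧
    b = (∑ i, c i • fun j : Fin n => if j = i then (0 : ℝ) else t) + d

/-- The set `Δ_{n,t}`. -/
def Delta (n t : ℕ) : Set (Fin n → ℕ) :=
  {a | (∀ i, 1 ≤ a i ∧ a i ≤ t) ∧ ∑ i, a i = t * (n - 1)} ∪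
  {a | ∃ i : Fin n, a = fun j => if j = i then 0 else t}

lemma omega_eval (n t : ℕ) (c : Fin n → ℝ) (hc1 : ∑ i, c i = 1) (j : Fin n) :
    (∑ i, c i • fun j' : Fin n => if j' = i then (0:ℝ) else (t:ℝ)) j = (t:ℝ) - c j * t := by
  rw [Finset.sum_apply]
  have hterm : ∀ i ∈ Finset.univ, (c i • fun j' : Fin n => if j' = i then (0:ℝ) else (t:ℝ)) j
      = c i * t - (if i = j then c i * t else 0) := by
    intro i _
    rcases eq_or_ne i j with h | h
    · subst h; simp
    · simp [Pi.smul_apply, smul_eq_mul, Ne.symm h, h]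
  rw [Finset.sum_congr rfl hterm, Finset.sum_sub_distrib, ← Finset.sum_mul, hc1]
  simp

lemma inOmega_iff (n t : ℕ) (b : Fin n → ℝ) :
    inOmega n t b ↔ ∃ c : Fin n → ℝ, (∀ i, 0 ≤ c i) ∧ (∑ i, c i = 1) ∧
      ∀ j, (t:ℝ) - c j * t ≤ b j := by
  constructor
  · rintro ⟨c, d, hc, hc1, hd, rfl⟩
    refine ⟨c, hc, hc1, fun j => ?_⟩
    rw [Pi.add_apply, omega_eval n t c hc1 j]
    linarith [hd j]
  · rintro ⟨c, hc, hc1, hb⟩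
    refine ⟨c, fun j => b j - ((t:ℝ) - c j * t), hc, hc1, fun j => sub_nonneg.mpr (hb j), ?_⟩
    funext j
    rw [Pi.add_apply, omega_eval n t c hc1 j]
    ring

lemma reduce_aux : ∀ (m n : ℕ) (a' : Fin n → ℕ), (∀ j, 1 ≤ a' j) →
    ∀ S : ℕ, n ≤ S → S ≤ ∑ j, a' j → ∑ j, a' j ≤ S + m →
    ∃ a : Fin n → ℕ, (∀ j, 1 ≤ a j ∧ a j ≤ a' j) ∧ ∑ j, a j = S := by
  intro m
  induction m with
  | zero =>
    intro n a' h1 S _ hle hub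
    exact ⟨a', fun j => ⟨h1 j, le_rfl⟩, le_antisymm hub hle⟩
  | succ m ih =>
    intro n a' h1 S hS hle hub
    rcases eq_or_lt_of_le hle with h | h
    · exact ⟨a', fun j => ⟨h1 j, le_rfl⟩, h.symm⟩
    · have hex : ∃ j, 2 ≤ a' j := by
        by_contra hc
        push_neg at hc
        have hsum : ∑ j, a' j ≤ ∑ _j : Fin n, 1 :=
          Finset.sum_le_sum fun j _ => Nat.lt_succ_iff.mp (hc j)
        simp only [Finset.sum_const, Finset.card_univ, Fintype.card_fin, smul_eq_mul,
          mul_one] at hsum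
        omega
      obtain ⟨j, hj⟩ := hex
      set a'' := Function.update a' j (a' j - 1) with ha''
      have hsum'' : ∑ i, a'' i + 1 = ∑ i, a' i := by
        rw [ha'', Finset.sum_update_of_mem (Finset.mem_univ j)]
        have := Finset.sum_eq_sum_sdiff_singleton_add (Finset.mem_univ j) a'
        omega
      have h1'' : ∀ i, 1 ≤ a'' i := by
        intro i
        by_cases h' : i = j
        · subst h'; simp [ha'']; omega
        · simp [ha'', Function.update_of_ne h', h1 i]
      have hle'' : ∀ i, a'' i ≤ a' i := by
        intro i
        by_cases h' : i = j
        · subst h'; simp [ha'']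
        · simp [ha'', Function.update_of_ne h']
      obtain ⟨a, hpa, hsa⟩ := ih n a'' h1'' S hS (by omega) (by omega)
      exact ⟨a, fun i => ⟨(hpa i).1, le_trans (hpa i).2 (hle'' i)⟩, hsa⟩

/-- Given that the integral closure of `I_{n,t}` is the ideal generated by the
monomials with exponent vector in `Ω`, (1) every nonnegative integer vector
`b ∈ Ω` dominates some `a ∈ Δ_{n,t}` coordinatewise, and (2) the integral
closure of `I_{n,t}` equals `⟨x^a : a ∈ Δ_{n,t}⟩`. -/
theorem stmt_4 (k : Type*) [Field k] (n t : ℕ) (hn : 3 ≤ n) (ht : 1 ≤ t)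
    (Ibar : Ideal (MvPolynomial (Fin n) k))
    (hIbar : Ibar = Ideal.span {m | ∃ b : Fin n → ℕ,
      inOmega n t (fun i => (b i : ℝ)) ∧ m = ∏ i, (X i : MvPolynomial (Fin n) k) ^ b i}) :
    (∀ b : Fin n → ℕ, inOmega n t (fun i => (b i : ℝ)) →
      ∃ a ∈ Delta n t, ∀ i, a i ≤ b i) ∧
    Ibar = Ideal.span {m | ∃ a ∈ Delta n t,
      m = ∏ i, (X i : MvPolynomial (Fin n) k) ^ a i} := by
  have ht0 : (0:ℝ) < t := by exact_mod_cast ht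
  have part1 : ∀ b : Fin n → ℕ, inOmega n t (fun i => (b i : ℝ)) →
      ∃ a ∈ Delta n t, ∀ i, a i ≤ b i := by
    intro b hb
    rw [inOmega_iff] at hb
    obtain ⟨c, hc0, hc1, hcb⟩ := hb
    by_cases hcase : ∃ i : Fin n, ∀ j, j ≠ i → t ≤ b j
    · obtain ⟨i, hi⟩ := hcase
      refine ⟨fun j => if j = i then 0 else t, Or.inr ⟨i, rfl⟩, fun j => ?_⟩
      by_cases h : j = i
      · simp [h]
      · simpa [h] using hi j h
    · push_neg at hcase
      have hb1 : ∀ j, 1 ≤ b j := by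
        intro j
        by_contra h0
        have hbj : (b j : ℝ) = 0 := by
          have : b j = 0 := by omega
          simp [this]
        have hkey : (t:ℝ) - c j * t ≤ 0 := by
          have := hcb j; rw [hbj] at this; linarith
        have hcj : 1 ≤ c j := by nlinarith
        have hrest : ∀ i, i ≠ j → c i = 0 := by
          intro i hij
          have hsub : ∑ x ∈ Finset.univ.erase j, c x + c j = 1 := by
            rw [Finset.sum_erase_add _ _ (Finset.mem_univ j)]; exact hc1
          have hnn : 0 ≤ ∑ x ∈ Finset.univ.erase j, c x :=
            Finset.sum_nonneg fun x _ => hc0 x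
          have hci : c i ≤ ∑ x ∈ Finset.univ.erase j, c x :=
            Finset.single_le_sum (fun x _ => hc0 x) (Finset.mem_erase.mpr ⟨hij, Finset.mem_univ i⟩)
          have := hc0 i
          linarith
        have hbig : ∀ i, i ≠ j → t ≤ b i := by
          intro i hij
          have := hcb i
          rw [hrest i hij] at this
          have : (t:ℝ) ≤ (b i : ℝ) := by linarith
          exact_mod_cast this
        obtain ⟨j', hj'ne, hj'lt⟩ := hcase j
        exact absurd (hbig j' hj'ne) (by omega)
      have ht2 : 2 ≤ t := by
        obtain ⟨j, _, hlt⟩ := hcase ⟨0, by omega⟩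
        have := hb1 j
        omega
      set a' : Fin n → ℕ := fun j => min (b j) t with ha'
      have h1' : ∀ j, 1 ≤ a' j := fun j => le_min (hb1 j) ht
      have hsum' : t * (n - 1) ≤ ∑ j, a' j := by
        have h1n : (1:ℕ) ≤ n := by omega
        have hr : ((t * (n-1) : ℕ) : ℝ) ≤ ((∑ j, a' j : ℕ) : ℝ) := by
          have hcast : ((t * (n-1) : ℕ) : ℝ) = (t:ℝ) * n - t := by
            push_cast [h1n]
            ring
          rw [hcast]
          have hterm : ∀ j, (t:ℝ) - c j * t ≤ (a' j : ℝ) := by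
            intro j
            have hmin : (a' j : ℝ) = min ((b j : ℕ):ℝ) ((t:ℕ):ℝ) := by
              rw [ha']; push_cast; rfl
            rw [hmin]
            refine le_min (hcb j) ?_
            nlinarith [hc0 j]
          calc (t:ℝ) * n - t = ∑ j : Fin n, ((t:ℝ) - c j * t) := by
                rw [Finset.sum_sub_distrib, ← Finset.sum_mul, hc1]
                simp [Finset.card_univ]
                ring
            _ ≤ ∑ j, (a' j : ℝ) := Finset.sum_le_sum fun j _ => hterm j
            _ = ((∑ j, a' j : ℕ) : ℝ) := by push_cast; rfl
        exact_mod_cast hr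
      have hnS : n ≤ t * (n - 1) := by
        calc n ≤ 2 * (n - 1) := by omega
          _ ≤ t * (n - 1) := Nat.mul_le_mul_right _ ht2
      obtain ⟨a, hpa, hsa⟩ := reduce_aux (∑ j, a' j) n a' h1' (t * (n-1)) hnS hsum' (by omega)
      refine ⟨a, Or.inl ⟨fun i => ⟨(hpa i).1, le_trans (hpa i).2 (min_le_right _ _)⟩, hsa⟩,
        fun i => le_trans (hpa i).2 (min_le_left _ _)⟩
  refine ⟨part1, ?_⟩
  subst hIbar
  apply le_antisymm
  · rw [Ideal.span_le]
    rintro m ⟨b, hbΩ, rfl⟩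
    obtain ⟨a, ha, hab⟩ := part1 b hbΩ
    have hfac : (∏ i, (X i : MvPolynomial (Fin n) k) ^ b i)
        = (∏ i, (X i : MvPolynomial (Fin n) k) ^ (b i - a i)) *
          ∏ i, (X i : MvPolynomial (Fin n) k) ^ a i := by
      rw [← Finset.prod_mul_distrib]
      refine Finset.prod_congr rfl fun i _ => ?_
      rw [← pow_add, Nat.sub_add_cancel (hab i)]
    rw [hfac]
    exact Ideal.mul_mem_left _ _ (Ideal.subset_span ⟨a, ha, rfl⟩)
  · rw [Ideal.span_le]
    rintro m ⟨a, ha, rfl⟩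
    apply Ideal.subset_span
    refine ⟨a, ?_, rfl⟩
    rw [inOmega_iff]
    rcases ha with ⟨ha1, hasum⟩ | ⟨i, rfl⟩
    · refine ⟨fun j => ((t:ℝ) - a j) / t, fun j => ?_, ?_, fun j => ?_⟩
      · apply div_nonneg _ ht0.le
        have := (ha1 j).2
        have : (a j : ℝ) ≤ t := by exact_mod_cast this
        linarith
      · have h1n : (1:ℕ) ≤ n := by omega
        have hA : (∑ j, (a j : ℝ)) = (t:ℝ) * n - t := by
          have : ((∑ j, a j : ℕ) : ℝ) = ((t * (n-1) : ℕ) : ℝ) := congrArg Nat.cast hasum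
          push_cast [h1n] at this
          linarith [this]
        rw [← Finset.sum_div, Finset.sum_sub_distrib, hA]
        simp only [Finset.sum_const, Finset.card_univ, Fintype.card_fin, nsmul_eq_mul]
        field_simp
        ring
      · rw [div_mul_cancel₀ _ ht0.ne']
        simp
    · refine ⟨fun j => if j = i then 1 else 0, fun j => ?_, ?_, fun j => ?_⟩
      · by_cases h : j = i <;> simp [h]
      · simp
      · by_cases h : j = i <;> simp [h]
end

section
/- Suppose (b_1,…,b_n) ∈ ℕ^n lies in Ω, with b_1,…,b_s < t and b_{s+1},…,b_n ≥ t for some s ≥ 2 (after reordering), and set a_{s+1} = ts − (b_1 + ⋯ + b_s). Then 0 < a_{s+1} ≤ t, the vector (b_1,…,b_s, a_{s+1}, t,…,t) lies in Δ_{n,t}, and it is coordinatewise ≤ (b_1,…,b_n). -/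
/-!
Write `L` for the `s` coordinates where `b < t`. The key inequality on `L` together with
`b < t` on `L` gives `t(s-1) ≤ ∑_L b < ts`, i.e. `0 < a_{s+1} ≤ t`. On a pair `{i, j} ⊆ L` it
gives `b_i + b_j ≥ t > b_j`, so `b_i ≥ 1`. The coordinates of the new vector then sum to
`ts + (n-s-1)t = t(n-1)`, and it lies below `b` since `a_{s+1} ≤ t ≤ b_{s+1}`.
-/

open Finset

namespace Delta

variable {ι : Type*}

/-- The paper's `a_{s+1}`, for `L` the set of coordinates below `t`. -/
def deficit (t : ℕ) (b : ι → ℕ) (L : Finset ι) : ℕ := t * #L - ∑ j ∈ L, b j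

/-- The paper's `(b_1,…,b_s, a_{s+1}, t,…,t)`, with `L` the first `s` coordinates and `k` the
`(s+1)`-st. -/
def truncation [DecidableEq ι] (t : ℕ) (b : ι → ℕ) (L : Finset ι) (k : ι) (i : ι) : ℕ :=
  if i ∈ L then b i else if i = k then deficit t b L else t

variable {t : ℕ} {b : ι → ℕ} {L : Finset ι}

lemma one_le_of_lt_of_ne [DecidableEq ι] (hkey : ∀ S : Finset ι, t * (#S - 1) ≤ ∑ i ∈ S, b i)
    {i j : ι} (hj : b j < t) (hij : i ≠ j) : 1 ≤ b i := by
  have hpair := hkey {i, j}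
  rw [card_pair hij, sum_pair hij] at hpair
  omega

lemma sum_lt_of_forall_lt (hL : L.Nonempty) (hsmall : ∀ i ∈ L, b i < t) :
    ∑ j ∈ L, b j < t * #L := by
  simpa [mul_comm] using sum_lt_sum_of_nonempty hL hsmall

lemma deficit_pos (hL : L.Nonempty) (hsmall : ∀ i ∈ L, b i < t) : 0 < deficit t b L :=
  Nat.sub_pos_of_lt (sum_lt_of_forall_lt hL hsmall)

lemma deficit_le (hkey : ∀ S : Finset ι, t * (#S - 1) ≤ ∑ i ∈ S, b i) :
    deficit t b L ≤ t := by
  have hL := hkey L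
  have : t * #L ≤ t * (#L - 1) + t := by
    rw [← Nat.mul_succ]; exact Nat.mul_le_mul_left t (by omega)
  unfold deficit; omega

variable [DecidableEq ι] {k : ι}

lemma truncation_mem_Icc (hL : 1 < #L) (hsmall : ∀ i ∈ L, b i < t)
    (hkey : ∀ S : Finset ι, t * (#S - 1) ≤ ∑ i ∈ S, b i) (i : ι) :
    1 ≤ truncation t b L k i ∧ truncation t b L k i ≤ t := by
  obtain ⟨j, hj⟩ : L.Nonempty := card_pos.mp (by omega)
  by_cases hiL : i ∈ L
  · obtain ⟨j', hj'L, hj'i⟩ := exists_mem_ne hL i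
    rw [truncation, if_pos hiL]
    exact ⟨one_le_of_lt_of_ne hkey (hsmall j' hj'L) hj'i.symm, (hsmall i hiL).le⟩
  · by_cases hik : i = k
    · rw [truncation, if_neg hiL, if_pos hik]
      exact ⟨deficit_pos ⟨j, hj⟩ hsmall, deficit_le hkey⟩
    · rw [truncation, if_neg hiL, if_neg hik]
      exact ⟨(Nat.zero_le _).trans_lt (hsmall j hj), le_rfl⟩

lemma truncation_le (hkey : ∀ S : Finset ι, t * (#S - 1) ≤ ∑ i ∈ S, b i)
    (hbig : ∀ i ∉ L, t ≤ b i) (i : ι) : truncation t b L k i ≤ b i := by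
  unfold truncation
  split_ifs with hiL hik
  · exact le_rfl
  · exact (deficit_le hkey).trans (hbig i hiL)
  · exact hbig i hiL

variable [Fintype ι]

lemma sum_truncation (hk : k ∉ L) (hsmall : ∀ i ∈ L, b i < t) :
    ∑ i, truncation t b L k i = t * (Fintype.card ι - 1) := by
  have hkc : k ∈ Lᶜ := mem_compl.mpr hk
  have hsumL : ∑ i ∈ L, truncation t b L k i = ∑ j ∈ L, b j :=
    sum_congr rfl fun i hi => if_pos hi
  have hrest : ∑ i ∈ Lᶜ.erase k, truncation t b L k i = (#Lᶜ - 1) * t := by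
    rw [← card_erase_of_mem hkc, ← smul_eq_mul, ← sum_const]
    refine sum_congr rfl fun i hi => ?_
    obtain ⟨hik, hiL⟩ := mem_erase.mp hi
    simp [truncation, mem_compl.mp hiL, hik]
  have hcard : #L + 1 ≤ Fintype.card ι := by
    rw [← card_univ, ← card_insert_of_notMem hk]; exact card_le_univ _
  obtain ⟨m, hm⟩ : ∃ m, Fintype.card ι = #L + 1 + m := ⟨Fintype.card ι - (#L + 1), by omega⟩
  rw [← sum_add_sum_compl L, ← add_sum_erase _ _ hkc, hsumL, hrest, card_compl, hm]
  have hle : ∑ j ∈ L, b j ≤ t * #L := by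
    simpa [mul_comm] using sum_le_sum fun i hi => (hsmall i hi).le
  rw [truncation, if_neg hk, if_pos rfl, deficit, show #L + 1 + m - #L - 1 = m by omega,
    show #L + 1 + m - 1 = #L + m by omega, mul_add, mul_comm m t]
  omega

lemma truncation_mem_Delta {n : ℕ} {b : Fin n → ℕ} {L : Finset (Fin n)} {k : Fin n}
    (hk : k ∉ L) (hL : 1 < #L) (hsmall : ∀ i ∈ L, b i < t)
    (hkey : ∀ S : Finset (Fin n), t * (#S - 1) ≤ ∑ i ∈ S, b i) :
    truncation t b L k ∈ Delta n t :=
  Or.inl ⟨truncation_mem_Icc hL hsmall hkey, by simpa using sum_truncation hk hsmall⟩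

end Delta

theorem stmt_5_general (n t : ℕ) (b : Fin n → ℕ)
    (s : ℕ) (hs2 : 2 ≤ s) (hsn : s < n)
    (hsmall : ∀ i : Fin n, (i : ℕ) < s → b i < t)
    (hbig : ∀ i : Fin n, s ≤ (i : ℕ) → t ≤ b i)
    (hkey : ∀ S : Finset (Fin n), t * (S.card - 1) ≤ ∑ i ∈ S, b i) :
    0 < t * s - ∑ j ∈ Finset.univ.filter (fun j : Fin n => (j : ℕ) < s), b j ∧
    t * s - ∑ j ∈ Finset.univ.filter (fun j : Fin n => (j : ℕ) < s), b j ≤ t ∧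
    (fun i : Fin n => if (i : ℕ) < s then b i
        else if (i : ℕ) = s then
          t * s - ∑ j ∈ Finset.univ.filter (fun j : Fin n => (j : ℕ) < s), b j
        else t) ∈ Delta n t ∧
    (∀ i : Fin n, (if (i : ℕ) < s then b i
        else if (i : ℕ) = s then
          t * s - ∑ j ∈ Finset.univ.filter (fun j : Fin n => (j : ℕ) < s), b j
        else t) ≤ b i) := by
  set L := univ.filter (fun j : Fin n => (j : ℕ) < s) with hL
  have hcard : #L = s := by rw [hL, Fin.card_filter_val_lt]; omega
  have hdeficit : t * s - ∑ j ∈ L, b j = Delta.deficit t b L := by rw [Delta.deficit, hcard]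
  have htrunc : ∀ i : Fin n, (if (i : ℕ) < s then b i else if (i : ℕ) = s then
      Delta.deficit t b L else t) = Delta.truncation t b L ⟨s, hsn⟩ i := by
    intro i
    simp [Delta.truncation, hL, Fin.ext_iff]
  have hsmallL : ∀ i ∈ L, b i < t := fun i hi => hsmall i (mem_filter.mp hi).2
  have hbigL : ∀ i ∉ L, t ≤ b i := fun i hi => hbig i (by simpa [hL] using hi)
  have hkL : (⟨s, hsn⟩ : Fin n) ∉ L := by simp [hL]
  simp only [hdeficit, htrunc]
  exact ⟨Delta.deficit_pos (card_pos.mp (by omega)) hsmallL, Delta.deficit_le hkey,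
    Delta.truncation_mem_Delta hkL (by omega) hsmallL hkey, Delta.truncation_le hkey hbigL⟩

/-- If `b ∈ ℕ^n` satisfies the key inequality `∑_{i∈S} b_i ≥ t(|S|−1)` for all
`S`, with `b_1,…,b_s < t` and `b_{s+1},…,b_n ≥ t` for some `s ≥ 2`, then with
`a_{s+1} = ts − (b_1 + ⋯ + b_s)` we have `0 < a_{s+1} ≤ t`, the vector
`(b_1,…,b_s,a_{s+1},t,…,t)` lies in `Δ_{n,t}`, and it is coordinatewise `≤ b`.
(Indices are `0`-based: the first `s` coordinates are those with `(i : ℕ) < s`.) -/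
theorem stmt_5 (n t : ℕ) (hn : 3 ≤ n) (ht : 1 ≤ t) (b : Fin n → ℕ)
    (s : ℕ) (hs2 : 2 ≤ s) (hsn : s < n)
    (hsmall : ∀ i : Fin n, (i : ℕ) < s → b i < t)
    (hbig : ∀ i : Fin n, s ≤ (i : ℕ) → t ≤ b i)
    (hkey : ∀ S : Finset (Fin n), t * (S.card - 1) ≤ ∑ i ∈ S, b i) :
    0 < t * s - ∑ j ∈ Finset.univ.filter (fun j : Fin n => (j : ℕ) < s), b j ∧
    t * s - ∑ j ∈ Finset.univ.filter (fun j : Fin n => (j : ℕ) < s), b j ≤ t ∧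
    (fun i : Fin n => if (i : ℕ) < s then b i
        else if (i : ℕ) = s then
          t * s - ∑ j ∈ Finset.univ.filter (fun j : Fin n => (j : ℕ) < s), b j
        else t) ∈ Delta n t ∧
    (∀ i : Fin n, (if (i : ℕ) < s then b i
        else if (i : ℕ) = s then
          t * s - ∑ j ∈ Finset.univ.filter (fun j : Fin n => (j : ℕ) < s), b j
        else t) ≤ b i) :=
  stmt_5_general n t b s hs2 hsn hsmall hbig hkey
end

section
/- For t ≥ 2, the colon ideal (J : x_1 x_2^{t−1} x_3^{t−1} x_4^t ⋯ x_n^t) equals ⟨x_1, x_2, x_3⟩, where J is the monomial ideal generated by {x^a : a ∈ Δ_{n,t}}; hence ⟨x_1,x_2,x_3⟩ is an associated prime of R/J. -/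
/-!
Both ideals are monomial, so `g ∈ (J : x^b)` iff for every monomial `x^m` of `g` some generator
`x^s`, `s ∈ Δ_{n,t}`, divides `x^(m+b)`; here `b = (1, t-1, t-1, t, …, t)` has `∑ b = t(n-1) - 1`.
If `x_i ∣ x^m` for some `i ≤ 3`, then `b` with its `i`-th entry raised by one is an interior point
of `Δ_{n,t}`. Otherwise, as all points of `Δ_{n,t}` are bounded by `t`, such an `s` would satisfy
`s ≤ b`: an interior point then has too small a sum, and a corner point has an entry `t` where `b`
has `1` or `t - 1`. The ideal `⟨x_1, x_2, x_3⟩` is prime, being the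
kernel of `x_1, x_2, x_3 ↦ 0`, and it is the annihilator of the class of `x^b` in `R/J`.
-/

open MvPolynomial Finset

namespace MvPolynomial

variable {σ R : Type*}

theorem prod_X_pow_univ [CommSemiring R] [Fintype σ] (a : σ → ℕ) :
    ∏ i, (X i : MvPolynomial σ R) ^ a i = monomial (Finsupp.equivFunOnFinite.symm a) 1 := by
  classical
  rw [prod_X_pow]
  congr
  ext i
  simp

theorem support_mul_monomial_one [CommSemiring R] (p : MvPolynomial σ R) (b : σ →₀ ℕ) :
    (p * monomial b 1).support = p.support.map (addRightEmbedding b) :=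
  AddMonoidAlgebra.support_coeff_mul_single p _ (by simp) _

theorem mem_colon_span_prod_X_pow_iff [CommSemiring R] [Fintype σ] {S : Set (σ → ℕ)} {b : σ → ℕ}
    {g : MvPolynomial σ R} :
    g ∈ (Ideal.span {p | ∃ a ∈ S, p = ∏ i, X i ^ a i}).colon
        (Ideal.span {∏ i, (X i : MvPolynomial σ R) ^ b i}) ↔
      ∀ m ∈ g.support, ∃ a ∈ S, a ≤ ⇑m + b := by
  have hS : {p | ∃ a ∈ S, p = ∏ i, (X i : MvPolynomial σ R) ^ a i} =
      (fun s => monomial s 1) '' (Finsupp.equivFunOnFinite ⁻¹' S) := by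
    ext p
    simp only [prod_X_pow_univ, Set.mem_image, Set.mem_preimage]
    constructor
    · rintro ⟨a, ha, rfl⟩
      exact ⟨_, by simpa using ha, rfl⟩
    · rintro ⟨s, hs, rfl⟩
      exact ⟨s, hs, by simp⟩
  rw [Ideal.mem_colon_span_singleton, hS, prod_X_pow_univ, mem_ideal_span_monomial_image,
    support_mul_monomial_one]
  simp only [Finset.forall_mem_map, addRightEmbedding_apply, Set.mem_preimage]
  refine forall₂_congr fun m _ => ⟨fun ⟨s, hs, hle⟩ => ⟨s, hs, fun i => by simpa using hle i⟩,
    fun ⟨a, ha, hle⟩ => ⟨Finsupp.equivFunOnFinite.symm a, by simpa using ha,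
      fun i => by simpa using hle i⟩⟩

theorem isPrime_span_X_image [CommRing R] [IsDomain R] (s : Set σ) :
    (Ideal.span (X '' s : Set (MvPolynomial σ R))).IsPrime := by
  classical
  set P := Ideal.span (X '' s : Set (MvPolynomial σ R))
  let setZero : MvPolynomial σ R →ₐ[R] MvPolynomial σ R :=
    aeval fun i => if i ∈ s then 0 else X i
  suffices P = RingHom.ker setZero from this ▸ RingHom.ker_isPrime _
  refine le_antisymm (Ideal.span_le.mpr ?_) fun p hp => ?_
  · rintro _ ⟨i, hi, rfl⟩
    simp [setZero, hi]
  have hsub : ∀ q, q - setZero q ∈ P := by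
    intro q
    induction q using MvPolynomial.induction_on with
    | C a => simp
    | add p q hp hq => simpa [add_sub_add_comm] using P.add_mem hp hq
    | mul_X p i hp =>
      have hsplit : p * X i - setZero (p * X i) =
          (p - setZero p) * X i + setZero p * (X i - setZero (X i)) := by
        rw [map_mul]; ring
      rw [hsplit]
      refine P.add_mem (P.mul_mem_right _ hp) (P.mul_mem_left _ ?_)
      by_cases hi : i ∈ s
      · simpa [setZero, hi] using Ideal.subset_span (Set.mem_image_of_mem X hi)
      · simp [setZero, hi]
  simpa [RingHom.mem_ker.mp hp] using hsub p

end MvPolynomial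

theorem Ideal.isAssociatedPrime_quotient_of_colon_eq {R : Type*} [CommRing R] {I P : Ideal R}
    (hP : P.IsPrime) {f : R} (h : I.colon (Ideal.span {f}) = P) :
    IsAssociatedPrime P (R ⧸ I) := by
  refine ⟨hP, Ideal.Quotient.mk I f, ?_⟩
  rw [← hP.radical, ← h]
  congr 1
  ext r
  rw [Submodule.mem_colon_singleton, Submodule.mem_bot, Ideal.mem_colon_span_singleton,
    Algebra.smul_def, Ideal.Quotient.algebraMap_eq, ← map_mul, Ideal.Quotient.eq_zero_iff_mem]

@[to_additive]
theorem Fin.prod_univ_eq_mul_prod_filter_three_le {M : Type*} [CommMonoid M] {n : ℕ}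
    (hn : 3 ≤ n) (g : Fin n → M) :
    ∏ i, g i = g ⟨0, by omega⟩ * g ⟨1, by omega⟩ * g ⟨2, by omega⟩ *
      ∏ j ∈ univ.filter (fun j : Fin n => 3 ≤ (j : ℕ)), g j := by
  have hlow : univ.filter (fun j : Fin n => ¬ 3 ≤ (j : ℕ)) =
      {⟨0, by omega⟩, ⟨1, by omega⟩, ⟨2, by omega⟩} := by
    ext j
    simp only [mem_filter, mem_univ, true_and, mem_insert, mem_singleton, Fin.ext_iff]
    omega
  rw [← prod_filter_mul_prod_filter_not univ (fun j : Fin n => 3 ≤ (j : ℕ)), hlow, mul_comm,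
    prod_insert (by simp [Fin.ext_iff]), prod_insert (by simp [Fin.ext_iff]), prod_singleton,
    mul_assoc (g _)]
  simp only [mul_assoc]

theorem Fin.card_filter_three_le {n : ℕ} (hn : 3 ≤ n) :
    #(univ.filter fun j : Fin n => 3 ≤ (j : ℕ)) = n - 3 := by
  have := Fin.sum_univ_eq_add_sum_filter_three_le hn (fun _ => 1)
  simp only [Finset.sum_const, card_univ, Fintype.card_fin, smul_eq_mul, mul_one] at this
  omega

theorem Fin.setOf_lt_three {n : ℕ} (hn : 3 ≤ n) :
    {i : Fin n | (i : ℕ) < 3} = {⟨0, by omega⟩, ⟨1, by omega⟩, ⟨2, by omega⟩} := by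
  ext i
  simp only [Set.mem_ofPred_eq, Set.mem_insert_iff, Set.mem_singleton_iff, Fin.ext_iff]
  omega

theorem le_of_mem_Delta {n t : ℕ} {s : Fin n → ℕ} (hs : s ∈ Delta n t) (i : Fin n) : s i ≤ t := by
  rcases hs with ⟨hbounds, -⟩ | ⟨j, rfl⟩
  · exact (hbounds i).2
  · dsimp only
    split_ifs <;> omega

def colonWitness (n t : ℕ) (j : Fin n) : ℕ :=
  if (j : ℕ) = 0 then 1 else if (j : ℕ) < 3 then t - 1 else t

section colonWitness

variable {n t : ℕ}

theorem colonWitness_eq_of_three_le {j : Fin n} (hj : 3 ≤ (j : ℕ)) : colonWitness n t j = t := by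
  simp only [colonWitness]
  rw [if_neg (by omega), if_neg (by omega)]

theorem prod_X_pow_colonWitness {k : Type*} [CommSemiring k] (hn : 3 ≤ n) :
    ∏ i, (X i : MvPolynomial (Fin n) k) ^ colonWitness n t i =
      X ⟨0, by omega⟩ * X ⟨1, by omega⟩ ^ (t - 1) * X ⟨2, by omega⟩ ^ (t - 1) *
        ∏ j ∈ univ.filter (fun j : Fin n => 3 ≤ (j : ℕ)), X j ^ t := by
  rw [Fin.prod_univ_eq_mul_prod_filter_three_le hn]
  refine congr_arg₂ _ (by simp [colonWitness]) (prod_congr rfl fun j hj => ?_)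
  rw [colonWitness_eq_of_three_le (mem_filter.mp hj).2]

theorem sum_colonWitness_add_one (hn : 3 ≤ n) (ht : 1 ≤ t) :
    ∑ j, colonWitness n t j + 1 = t * (n - 1) := by
  rw [Fin.sum_univ_eq_add_sum_filter_three_le hn,
    sum_congr rfl fun j hj => colonWitness_eq_of_three_le (mem_filter.mp hj).2, sum_const,
    Fin.card_filter_three_le hn, smul_eq_mul]
  change 1 + (t - 1) + (t - 1) + (n - 3) * t + 1 = t * (n - 1)
  zify [hn, ht, (by omega : 1 ≤ n)]
  ring

theorem colonWitness_add_single_mem_Delta (hn : 3 ≤ n) (ht : 2 ≤ t) {i : Fin n}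
    (hi : (i : ℕ) < 3) : colonWitness n t + Pi.single i 1 ∈ Delta n t := by
  refine Or.inl ⟨fun j => ?_, ?_⟩
  · simp only [Pi.add_apply, Pi.single_apply, colonWitness, Fin.ext_iff]
    split_ifs <;> omega
  · simp only [Pi.add_apply]
    rw [sum_add_distrib, sum_pi_single', if_pos (mem_univ i),
      sum_colonWitness_add_one hn (by omega)]

theorem notMem_Delta_of_le_colonWitness (hn : 3 ≤ n) (ht : 2 ≤ t) {s : Fin n → ℕ}
    (hs : s ≤ colonWitness n t) : s ∉ Delta n t := by
  rintro (⟨-, hsum⟩ | ⟨i, rfl⟩)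
  · have := sum_le_sum fun j (_ : j ∈ univ) => hs j
    have := sum_colonWitness_add_one hn (t := t) (by omega)
    omega
  · by_cases hi : (i : ℕ) = 0
    · have := hs ⟨1, by omega⟩
      simp only [colonWitness, Fin.ext_iff, hi, one_ne_zero, Nat.one_lt_ofNat, ↓reduceIte]
        at this
      omega
    · have := hs ⟨0, by omega⟩
      simp only [colonWitness, Fin.ext_iff, Ne.symm hi, ↓reduceIte] at this
      omega

theorem exists_mem_Delta_le_add_colonWitness_iff (hn : 3 ≤ n) (ht : 2 ≤ t) (m : Fin n → ℕ) :
    (∃ s ∈ Delta n t, s ≤ m + colonWitness n t) ↔ ∃ i ∈ {i : Fin n | (i : ℕ) < 3}, m i ≠ 0 := by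
  constructor
  · rintro ⟨s, hs, hle⟩
    by_contra! hm
    refine notMem_Delta_of_le_colonWitness hn ht (fun j => ?_) hs
    by_cases hj : (j : ℕ) < 3
    · simpa [hm j hj] using hle j
    · rw [colonWitness_eq_of_three_le (by omega)]
      exact le_of_mem_Delta hs j
  · rintro ⟨i, hi, hmi⟩
    refine ⟨_, colonWitness_add_single_mem_Delta hn ht hi, fun j => ?_⟩
    simp only [Pi.add_apply, Pi.single_apply]
    split_ifs with h
    · subst h; omega
    · omega

end colonWitness

/-- For `t ≥ 2`, `(J : x_1 x_2^{t−1} x_3^{t−1} x_4^t ⋯ x_n^t) = ⟨x_1,x_2,x_3⟩`,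
where `J = ⟨x^a : a ∈ Δ_{n,t}⟩`; hence `⟨x_1,x_2,x_3⟩` is an associated prime
of `R/J`.  (Indices are `0`-based: `x_1,x_2,x_3` are `X 0, X 1, X 2`.) -/
theorem stmt_6 (k : Type*) [Field k] (n t : ℕ) (hn : 3 ≤ n) (ht : 2 ≤ t) :
    (Ideal.span {m | ∃ a ∈ Delta n t,
        m = ∏ i, (X i : MvPolynomial (Fin n) k) ^ a i}).colon
      (Ideal.span {X (⟨0, by omega⟩ : Fin n) *
        X (⟨1, by omega⟩ : Fin n) ^ (t - 1) * X (⟨2, by omega⟩ : Fin n) ^ (t - 1) *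
        ∏ j ∈ Finset.univ.filter (fun j : Fin n => 3 ≤ (j : ℕ)),
          (X j : MvPolynomial (Fin n) k) ^ t})
      = Ideal.span {X (⟨0, by omega⟩ : Fin n), X ⟨1, by omega⟩,
          (X (⟨2, by omega⟩ : Fin n) : MvPolynomial (Fin n) k)} ∧
    IsAssociatedPrime
      (Ideal.span {X (⟨0, by omega⟩ : Fin n), X ⟨1, by omega⟩,
        (X (⟨2, by omega⟩ : Fin n) : MvPolynomial (Fin n) k)})
      (MvPolynomial (Fin n) k ⧸ Ideal.span {m | ∃ a ∈ Delta n t,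
        m = ∏ i, (X i : MvPolynomial (Fin n) k) ^ a i}) := by
  have hP : Ideal.span {X (⟨0, by omega⟩ : Fin n), X ⟨1, by omega⟩,
      (X (⟨2, by omega⟩ : Fin n) : MvPolynomial (Fin n) k)} =
      Ideal.span (X '' {i : Fin n | (i : ℕ) < 3}) := by
    rw [Fin.setOf_lt_three hn, Set.image_insert_eq, Set.image_insert_eq, Set.image_singleton]
  rw [hP, ← prod_X_pow_colonWitness hn]
  have hcolon : (Ideal.span {m | ∃ a ∈ Delta n t,
      m = ∏ i, (X i : MvPolynomial (Fin n) k) ^ a i}).colon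
        ↑(Ideal.span {∏ i, (X i : MvPolynomial (Fin n) k) ^ colonWitness n t i}) =
      Ideal.span (X '' {i : Fin n | (i : ℕ) < 3}) := by
    ext g
    rw [mem_colon_span_prod_X_pow_iff, mem_ideal_span_X_image]
    exact forall₂_congr fun m _ => exists_mem_Delta_le_add_colonWitness_iff hn ht m
  exact ⟨hcolon, Ideal.isAssociatedPrime_quotient_of_colon_eq (isPrime_span_X_image _) hcolon⟩
end
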